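/- arXiv:math/0504238 — 2 statements merged into one kernel-verified Lean document; each statement's English description precedes it below -/
import Mathlib

section
/- Let K be an algebraically closed field, d ≥ 1, a₁, a₂ ≥ 1. A point (x₁, x₂, x₃, y₁, y₂) ∈ K⁵ satisfies the three equations y₁^d = x₁^(a₁d)·x₃, y₂^d = x₂^(a₂d)·x₃, and y₁^(d−1)·y₂ = x₁^(a₁(d−1))·x₂^(a₂)·x₃ if and only if there exist u₁, u₂, u₃ ∈ K with x₁ = u₁, x₂ = u₂, x₃ = u₃^d, y₁ = u₁^(a₁)·u₃, y₂ = u₂^(a₂)·u₃. -/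
theorem stmt_1 (K : Type*) [Field K] [IsAlgClosed K] (d a₁ a₂ : ℕ)
    (hd : 1 ≤ d) (ha₁ : 1 ≤ a₁) (ha₂ : 1 ≤ a₂) (x₁ x₂ x₃ y₁ y₂ : K) :
    (y₁ ^ d = x₁ ^ (a₁ * d) * x₃ ∧ y₂ ^ d = x₂ ^ (a₂ * d) * x₃ ∧
      y₁ ^ (d - 1) * y₂ = x₁ ^ (a₁ * (d - 1)) * x₂ ^ a₂ * x₃) ↔
      ∃ u₁ u₂ u₃ : K, x₁ = u₁ ∧ x₂ = u₂ ∧ x₃ = u₃ ^ d ∧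
        y₁ = u₁ ^ a₁ * u₃ ∧ y₂ = u₂ ^ a₂ * u₃ := by
  obtain ⟨e, rfl⟩ : ∃ e, d = e + 1 := ⟨d - 1, (Nat.succ_pred_eq_of_pos hd).symm⟩
  simp only [Nat.add_sub_cancel] at *
  have hd0 : e + 1 ≠ 0 := Nat.succ_ne_zero e
  have ha₁0 : a₁ ≠ 0 := Nat.one_le_iff_ne_zero.mp ha₁
  have ha₂0 : a₂ ≠ 0 := Nat.one_le_iff_ne_zero.mp ha₂
  constructor
  · rintro ⟨h1, h2, h3⟩
    by_cases hx1 : x₁ = 0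
    · have hy1 : y₁ = 0 := by
        have : y₁ ^ (e + 1) = 0 := by
          rw [h1, hx1, zero_pow (by positivity), zero_mul]
        exact pow_eq_zero_iff hd0 |>.mp this
      by_cases hx2 : x₂ = 0
      · have hy2 : y₂ = 0 := by
          have : y₂ ^ (e + 1) = 0 := by
            rw [h2, hx2, zero_pow (by positivity), zero_mul]
          exact pow_eq_zero_iff hd0 |>.mp this
        obtain ⟨u₃, hu⟩ := IsAlgClosed.exists_pow_nat_eq x₃ (n := e + 1) (Nat.succ_pos e)
        exact ⟨x₁, x₂, u₃, rfl, rfl, hu.symm, by simp [hx1, hy1, zero_pow ha₁0],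
          by simp [hx2, hy2, zero_pow ha₂0]⟩
      · refine ⟨x₁, x₂, y₂ / x₂ ^ a₂, rfl, rfl, ?_, ?_, ?_⟩
        · rw [div_pow, ← pow_mul, h2, mul_div_cancel_left₀ _ (pow_ne_zero _ hx2)]
        · simp [hx1, hy1, zero_pow ha₁0]
        · rw [mul_div_cancel₀ _ (pow_ne_zero _ hx2)]
    · by_cases hy1 : y₁ = 0
      · have hx3 : x₃ = 0 := by
          have := h1
          rw [hy1, zero_pow hd0] at this
          rcases mul_eq_zero.mp this.symm with h | h
          · exact absurd (pow_eq_zero_iff (by positivity) |>.mp h) hx1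
          · exact h
        have hy2 : y₂ = 0 := by
          have : y₂ ^ (e + 1) = 0 := by rw [h2, hx3, mul_zero]
          exact pow_eq_zero_iff hd0 |>.mp this
        exact ⟨x₁, x₂, 0, rfl, rfl, by simp [hx3, zero_pow hd0], by simp [hy1],
          by simp [hy2]⟩
      · refine ⟨x₁, x₂, y₁ / x₁ ^ a₁, rfl, rfl, ?_, ?_, ?_⟩
        · rw [div_pow, ← pow_mul, h1, mul_div_cancel_left₀ _ (pow_ne_zero _ hx1)]
        · rw [mul_div_cancel₀ _ (pow_ne_zero _ hx1)]
        · have key : y₁ ^ e * (y₂ * x₁ ^ a₁) = y₁ ^ e * (x₂ ^ a₂ * y₁) := by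
            have e1 : y₁ ^ e * y₂ * x₁ ^ a₁ = x₁ ^ (a₁ * e) * x₂ ^ a₂ * x₃ * x₁ ^ a₁ := by
              rw [h3]
            have e2 : x₂ ^ a₂ * y₁ ^ (e + 1) = x₂ ^ a₂ * (x₁ ^ (a₁ * (e + 1)) * x₃) := by
              rw [h1]
            calc y₁ ^ e * (y₂ * x₁ ^ a₁) = y₁ ^ e * y₂ * x₁ ^ a₁ := by ring
              _ = x₁ ^ (a₁ * e) * x₂ ^ a₂ * x₃ * x₁ ^ a₁ := e1
              _ = x₂ ^ a₂ * (x₁ ^ (a₁ * e) * x₁ ^ a₁ * x₃) := by ring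
              _ = x₂ ^ a₂ * (x₁ ^ (a₁ * (e + 1)) * x₃) := by
                    rw [← pow_add, Nat.mul_succ]
              _ = x₂ ^ a₂ * y₁ ^ (e + 1) := e2.symm
              _ = y₁ ^ e * (x₂ ^ a₂ * y₁) := by rw [pow_succ]; ring
          have := mul_left_cancel₀ (pow_ne_zero e hy1) key
          field_simp
          linear_combination this
  · rintro ⟨u₁, u₂, u₃, rfl, rfl, rfl, rfl, rfl⟩
    refine ⟨?_, ?_, ?_⟩
    · rw [mul_pow, ← pow_mul]
    · rw [mul_pow, ← pow_mul]
    · rw [mul_pow, ← pow_mul, pow_succ]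
      ring
end

section
/- Let K be an algebraically closed field, d ≥ 1, a₁, a₂ ≥ 1. The set V = {(u₁, u₂, u₃^d, u₁^(a₁)u₃, u₂^(a₂)u₃) : u₁, u₂, u₃ ∈ K} ⊂ K⁵ is the zero set of a set of 3 polynomials; in particular, the arithmetical rank of V is at most 3. -/
open MvPolynomial in
theorem stmt_9 (K : Type*) [Field K] [IsAlgClosed K] (d a₁ a₂ : ℕ)
    (hd : 1 ≤ d) (ha₁ : 1 ≤ a₁) (ha₂ : 1 ≤ a₂) :
    ∃ F₁ F₂ F₃ : MvPolynomial (Fin 5) K,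
      {v : Fin 5 → K | ∃ u₁ u₂ u₃ : K,
          v = ![u₁, u₂, u₃ ^ d, u₁ ^ a₁ * u₃, u₂ ^ a₂ * u₃]} =
        {v : Fin 5 → K | MvPolynomial.eval v F₁ = 0 ∧
          MvPolynomial.eval v F₂ = 0 ∧ MvPolynomial.eval v F₃ = 0} := by
  obtain ⟨e, rfl⟩ : ∃ e, d = e + 1 := ⟨d - 1, (Nat.succ_pred_eq_of_pos hd).symm⟩
  refine ⟨X 3 ^ (e + 1) - X 0 ^ (a₁ * (e + 1)) * X 2,
          X 4 ^ (e + 1) - X 1 ^ (a₂ * (e + 1)) * X 2,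
          X 3 ^ e * X 4 - X 0 ^ (a₁ * e) * X 1 ^ a₂ * X 2, ?_⟩
  ext v
  simp only [Set.mem_setOf_eq, map_sub, map_mul, map_pow, eval_X, sub_eq_zero]
  constructor
  · rintro ⟨u₁, u₂, u₃, rfl⟩
    simp only [Matrix.cons_val_zero, Matrix.cons_val_one, Matrix.head_cons,
      Matrix.cons_val_two, Matrix.tail_cons, Matrix.cons_val_three,
      Matrix.cons_val_four]
    refine ⟨?_, ?_, ?_⟩ <;>
      rw [mul_pow, ← pow_mul] <;> ring
  · rintro ⟨h1, h2, h3⟩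
    have key : ∃ u₃ : K, v 2 = u₃ ^ (e + 1) ∧ v 3 = v 0 ^ a₁ * u₃ ∧
        v 4 = v 1 ^ a₂ * u₃ := by
      by_cases h0 : v 0 = 0
      · have hv3 : v 3 = 0 := by
          have : v 3 ^ (e + 1) = 0 := by
            rw [h1, h0, zero_pow (by positivity), zero_mul]
          exact pow_eq_zero_iff (Nat.succ_ne_zero e) |>.mp this
        by_cases hv1 : v 1 = 0
        · have hv4 : v 4 = 0 := by
            have : v 4 ^ (e + 1) = 0 := by
              rw [h2, hv1, zero_pow (by positivity), zero_mul]
            exact pow_eq_zero_iff (Nat.succ_ne_zero e) |>.mp this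
          obtain ⟨u₃, hu⟩ := IsAlgClosed.exists_pow_nat_eq (v 2) (n := e + 1)
            (Nat.succ_pos e)
          exact ⟨u₃, hu.symm, by rw [hv3, h0, zero_pow (by omega), zero_mul],
            by rw [hv4, hv1, zero_pow (by omega), zero_mul]⟩
        · have h1p : v 1 ^ a₂ ≠ 0 := pow_ne_zero _ hv1
          refine ⟨v 4 / v 1 ^ a₂, ?_, ?_, by field_simp⟩
          · rw [div_pow, eq_div_iff (pow_ne_zero _ h1p), ← pow_mul, h2, mul_comm]
          · rw [hv3, h0, zero_pow (by omega), zero_mul]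
      · have h0p : v 0 ^ a₁ ≠ 0 := pow_ne_zero _ h0
        refine ⟨v 3 / v 0 ^ a₁, ?_, by field_simp, ?_⟩
        · rw [div_pow, eq_div_iff (pow_ne_zero _ h0p), ← pow_mul, h1, mul_comm]
        · by_cases hv3 : v 3 = 0
          · have hv2 : v 2 = 0 := by
              have := h1
              rw [hv3, zero_pow (Nat.succ_ne_zero e)] at this
              have hp : v 0 ^ (a₁ * (e + 1)) ≠ 0 := pow_ne_zero _ h0
              exact (mul_eq_zero.mp this.symm).resolve_left hp
            have hv4 : v 4 = 0 := by
              have : v 4 ^ (e + 1) = 0 := by rw [h2, hv2, mul_zero]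
              exact pow_eq_zero_iff (Nat.succ_ne_zero e) |>.mp this
            simp [hv3, hv4]
          · rw [← mul_div_assoc, eq_div_iff h0p]
            have hcancel : v 3 ^ e * (v 4 * v 0 ^ a₁) = v 3 ^ e * (v 1 ^ a₂ * v 3) := by
              have : v 3 ^ e * v 4 * v 0 ^ a₁ = v 0 ^ (a₁ * e) * v 1 ^ a₂ * v 2 * v 0 ^ a₁ := by
                rw [h3]
              calc v 3 ^ e * (v 4 * v 0 ^ a₁)
                  = v 0 ^ (a₁ * e) * v 1 ^ a₂ * v 2 * v 0 ^ a₁ := by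
                    rw [← this]; ring
                _ = v 0 ^ (a₁ * (e + 1)) * v 2 * v 1 ^ a₂ := by
                    rw [mul_add, pow_add, mul_one]; ring
                _ = v 3 ^ (e + 1) * v 1 ^ a₂ := by rw [← h1]
                _ = v 3 ^ e * (v 1 ^ a₂ * v 3) := by ring
            exact mul_left_cancel₀ (pow_ne_zero e hv3) hcancel
    obtain ⟨u₃, hu2, hu3, hu4⟩ := key
    refine ⟨v 0, v 1, u₃, ?_⟩
    funext i
    fin_cases i <;> simp [hu2, hu3, hu4]
end
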